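/- Let W' be a reflection subgroup of W. Then for each i ∈ {1,2}, Φ_i(W') = W'·Δ_i(W'); that is, every root of Φ_i whose reflection lies in W' is obtained by applying an element of W' to a root in Δ_i(W'). -/

import Mathlib

open Pointwise

/-- The positive linear cone of a subset `A` of a real vector space: finite linear
combinations of elements of `A` with all coefficients nonnegative and at least one
strictly positive. -/
def PLC {V : Type*} [AddCommGroup V] [Module ℝ V] (A : Set V) : Set V :=
  { v | ∃ c : V →₀ ℝ, (∀ a, 0 ≤ c a) ∧ ↑c.support ⊆ A ∧ c ≠ 0 ∧
          v = c.sum fun a t => t • a }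

/-- `altEnd a b m` is the alternating product `⋯ a b a b` … of `m` factors,
ending with `b` (e.g. `altEnd a b 3 = b * a * b`). -/
def altEnd {G : Type*} [Monoid G] : G → G → ℕ → G
  | _, _, 0 => 1
  | a, b, m + 1 => altEnd b a m * b

/-- The class of `z` under the equivalence "being nonzero scalar multiples of each
other" (the class `ẑ`). -/
def rayClass {V : Type*} [AddCommGroup V] [Module ℝ V] (z : V) : Set V :=
  { v | ∃ c : ℝ, c ≠ 0 ∧ v = c • z }

/-- The set `Â = {ẑ : z ∈ A}` of scalar-equivalence classes of elements of `A`. -/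
def rayClasses {V : Type*} [AddCommGroup V] [Module ℝ V] (A : Set V) : Set (Set V) :=
  { C | ∃ z ∈ A, C = rayClass z }

/-- A Coxeter datum `(S, V₁, V₂, Π₁, Π₂, ⟨·,·⟩)` satisfying (D1)–(D5), together with
its associated abstract Coxeter group `W` (a group generated by involutions
`r s`, acting faithfully on `V₁` and `V₂` in the prescribed way, with the pairing
`W`-invariant), the decomposition `Φᵢ = Φᵢ⁺ ⊎ Φᵢ⁻` of the paired root systems, the
`W`-equivariant bijection `φ : Φ₁ → Φ₂` (with inverse `phiInv`), and the reflections
`r_x ∈ T` attached to the roots `x ∈ Φ₁` (`refl₁`) resp. `y ∈ Φ₂` (`refl₂`). -/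
structure CoxeterDatum (S : Type*) (V₁ : Type*) (V₂ : Type*) (W : Type*)
    [AddCommGroup V₁] [Module ℝ V₁] [AddCommGroup V₂] [Module ℝ V₂] [Group W] where
  pair : V₁ →ₗ[ℝ] V₂ →ₗ[ℝ] ℝ
  α : S → V₁
  β : S → V₂
  α_inj : Function.Injective α
  β_inj : Function.Injective β
  D1 : ∀ s, pair (α s) (β s) = 1
  D2a : (0 : V₁) ∉ PLC (Set.range α)
  D2b : (0 : V₂) ∉ PLC (Set.range β)
  D2c : ∀ s, α s ∉ PLC (Set.range α \ {α s})
  D2d : ∀ s, β s ∉ PLC (Set.range β \ {β s})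
  D3 : ∀ s t, s ≠ t → pair (α s) (β t) ≤ 0
  D4 : ∀ s t, pair (α s) (β t) = 0 → pair (α t) (β s) = 0
  D5 : ∀ s t, s ≠ t →
    (∃ m : ℕ, 2 ≤ m ∧ pair (α s) (β t) * pair (α t) (β s) = Real.cos (Real.pi / m) ^ 2) ∨
      1 ≤ pair (α s) (β t) * pair (α t) (β s)
  /-- the Coxeter generators `R = {r s : s ∈ S}` of `W` -/
  r : S → W
  r_gen : Subgroup.closure (Set.range r) = ⊤
  r_ne_one : ∀ s, r s ≠ 1
  r_sq : ∀ s, r s * r s = 1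
  /-- the faithful action of `W` on `V₁` -/
  ρ₁ : W →* Module.End ℝ V₁
  /-- the faithful action of `W` on `V₂` -/
  ρ₂ : W →* Module.End ℝ V₂
  ρ₁_inj : Function.Injective ρ₁
  ρ₂_inj : Function.Injective ρ₂
  hr₁ : ∀ s x, ρ₁ (r s) x = x - (2 * pair x (β s)) • α s
  hr₂ : ∀ s y, ρ₂ (r s) y = y - (2 * pair (α s) y) • β s
  pair_inv : ∀ w x y, pair (ρ₁ w x) (ρ₂ w y) = pair x y
  /-- the `W`-equivariant bijection `φ : Φ₁ → Φ₂` -/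
  phi : V₁ → V₂
  /-- the inverse `φ⁻¹ : Φ₂ → Φ₁` -/
  phiInv : V₂ → V₁
  /-- the reflection `r_x` corresponding to a root `x ∈ Φ₁` -/
  refl₁ : V₁ → W
  /-- the reflection `r_y` corresponding to a root `y ∈ Φ₂` -/
  refl₂ : V₂ → W
  decomp₁ : { v | ∃ w s, v = ρ₁ w (α s) } =
      ({ v | ∃ w s, v = ρ₁ w (α s) } ∩ PLC (Set.range α)) ∪
        (-({ v | ∃ w s, v = ρ₁ w (α s) } ∩ PLC (Set.range α)))
  disj₁ : Disjoint ({ v | ∃ w s, v = ρ₁ w (α s) } ∩ PLC (Set.range α))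
      (-({ v | ∃ w s, v = ρ₁ w (α s) } ∩ PLC (Set.range α)))
  decomp₂ : { v | ∃ w s, v = ρ₂ w (β s) } =
      ({ v | ∃ w s, v = ρ₂ w (β s) } ∩ PLC (Set.range β)) ∪
        (-({ v | ∃ w s, v = ρ₂ w (β s) } ∩ PLC (Set.range β)))
  disj₂ : Disjoint ({ v | ∃ w s, v = ρ₂ w (β s) } ∩ PLC (Set.range β))
      (-({ v | ∃ w s, v = ρ₂ w (β s) } ∩ PLC (Set.range β)))
  phi_mem : ∀ x ∈ { v | ∃ w s, v = ρ₁ w (α s) }, phi x ∈ { v | ∃ w s, v = ρ₂ w (β s) }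
  phiInv_mem : ∀ y ∈ { v | ∃ w s, v = ρ₂ w (β s) }, phiInv y ∈ { v | ∃ w s, v = ρ₁ w (α s) }
  phiInv_phi : ∀ x ∈ { v | ∃ w s, v = ρ₁ w (α s) }, phiInv (phi x) = x
  phi_phiInv : ∀ y ∈ { v | ∃ w s, v = ρ₂ w (β s) }, phi (phiInv y) = y
  phi_simple : ∀ s, phi (α s) = β s
  phi_equiv : ∀ w, ∀ x ∈ { v | ∃ w s, v = ρ₁ w (α s) }, phi (ρ₁ w x) = ρ₂ w (phi x)
  refl₁_eq : ∀ w s, refl₁ (ρ₁ w (α s)) = w * r s * w⁻¹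
  refl₂_eq : ∀ w s, refl₂ (ρ₂ w (β s)) = w * r s * w⁻¹
  refl₁_act : ∀ x ∈ { v | ∃ w s, v = ρ₁ w (α s) }, ∀ v,
      ρ₁ (refl₁ x) v = v - (2 * pair v (phi x)) • x
  refl₂_act : ∀ y ∈ { v | ∃ w s, v = ρ₂ w (β s) }, ∀ v,
      ρ₂ (refl₂ y) v = v - (2 * pair (phiInv y) v) • y

namespace CoxeterDatum

variable {S V₁ V₂ W : Type*} [AddCommGroup V₁] [Module ℝ V₁]
  [AddCommGroup V₂] [Module ℝ V₂] [Group W]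

variable (D : CoxeterDatum S V₁ V₂ W)

/-- The root system `Φ₁ = W Π₁`. -/
def Phi₁ : Set V₁ := { v | ∃ w s, v = D.ρ₁ w (D.α s) }

/-- The root system `Φ₂ = W Π₂`. -/
def Phi₂ : Set V₂ := { v | ∃ w s, v = D.ρ₂ w (D.β s) }

/-- The positive roots `Φ₁⁺ = Φ₁ ∩ PLC Π₁`. -/
def PhiPos₁ : Set V₁ := D.Phi₁ ∩ PLC (Set.range D.α)

/-- The positive roots `Φ₂⁺ = Φ₂ ∩ PLC Π₂`. -/
def PhiPos₂ : Set V₂ := D.Phi₂ ∩ PLC (Set.range D.β)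

/-- The negative roots `Φ₁⁻ = -Φ₁⁺`. -/
def PhiNeg₁ : Set V₁ := -D.PhiPos₁

/-- The negative roots `Φ₂⁻ = -Φ₂⁺`. -/
def PhiNeg₂ : Set V₂ := -D.PhiPos₂

/-- The set `T = ⋃_{w ∈ W} w R w⁻¹` of reflections of `W`. -/
def T : Set W := { t | ∃ w s, t = w * D.r s * w⁻¹ }

/-- The length function `ℓ` of `W` with respect to the Coxeter generators `R`. -/
noncomputable def len (w : W) : ℕ :=
  sInf { n | ∃ l : List S, l.length = n ∧ (l.map D.r).prod = w }

/-- `N̄ w = {t ∈ T : ℓ(w t) < ℓ(w)}`. -/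
noncomputable def Nbar (w : W) : Set W :=
  { t | t ∈ D.T ∧ D.len (w * t) < D.len w }

/-- `N₁ w = {ẑ : z ∈ Φ₁⁺, w z ∈ Φ₁⁻}`. -/
def N₁ (w : W) : Set (Set V₁) :=
  { C | ∃ z, z ∈ D.PhiPos₁ ∧ D.ρ₁ w z ∈ D.PhiNeg₁ ∧ C = rayClass z }

/-- `N₂ w = {ẑ : z ∈ Φ₂⁺, w z ∈ Φ₂⁻}`. -/
def N₂ (w : W) : Set (Set V₂) :=
  { C | ∃ z, z ∈ D.PhiPos₂ ∧ D.ρ₂ w z ∈ D.PhiNeg₂ ∧ C = rayClass z }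

/-- A subgroup `W'` of `W` is a reflection subgroup when `W' = ⟨W' ∩ T⟩`. -/
def IsReflectionSubgroup (W' : Subgroup W) : Prop :=
  W' = Subgroup.closure ((W' : Set W) ∩ D.T)

/-- `Φ₁(W') = {x ∈ Φ₁ : r_x ∈ W'}`. -/
def PhiSub₁ (W' : Subgroup W) : Set V₁ :=
  { x | x ∈ D.Phi₁ ∧ D.refl₁ x ∈ W' }

/-- `Φ₂(W') = {y ∈ Φ₂ : r_y ∈ W'}`. -/
def PhiSub₂ (W' : Subgroup W) : Set V₂ :=
  { y | y ∈ D.Phi₂ ∧ D.refl₂ y ∈ W' }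

/-- The canonical generators `S(W') = {t ∈ T : N̄(t) ∩ W' = {t}}`. -/
noncomputable def SW (W' : Subgroup W) : Set W :=
  { t | t ∈ D.T ∧ D.Nbar t ∩ (W' : Set W) = {t} }

/-- `Δ₁(W') = {x ∈ Φ₁⁺ : r_x ∈ S(W')}`. -/
noncomputable def Delta₁ (W' : Subgroup W) : Set V₁ :=
  { x | x ∈ D.PhiPos₁ ∧ D.refl₁ x ∈ D.SW W' }

/-- `Δ₂(W') = {y ∈ Φ₂⁺ : r_y ∈ S(W')}`. -/
noncomputable def Delta₂ (W' : Subgroup W) : Set V₂ :=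
  { y | y ∈ D.PhiPos₂ ∧ D.refl₂ y ∈ D.SW W' }

/-- The length function `ℓ_{W'}` of a reflection subgroup `W'` with respect to its
canonical generators `S(W')`. -/
noncomputable def lenIn (W' : Subgroup W) (w : W) : ℕ :=
  sInf { n | ∃ l : List W, l.length = n ∧ (∀ t ∈ l, t ∈ D.SW W') ∧ l.prod = w }

end CoxeterDatum

/-!
For a root `z` with `r_z ∈ W'` induct on `ℓ(r_z)`. If `r_z ∈ S(W')`, then `z` or `-z = r_z z`
lies in `Δ₁(W')`. Otherwise some reflection `r_y ≠ r_z` of `W'` lies in `N̄(r_z)`, i.e.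
`r_z y ∈ Φ₁⁻`, and from this one finds `w ∈ W'` with `ℓ(r_{w z}) = ℓ(w r_z w⁻¹) < ℓ(r_z)`.
Everything rests on the criterion `w y ∈ Φ₁⁻ ↔ ℓ(w r_y) < ℓ(w)` for `y ∈ Φ₁⁺`, whose key input is
(D2): a simple reflection `r_s` sends to `Φ₁⁻` only the positive roots on the ray of `α_s`.
The statement for `Φ₂` is the one for `Φ₁` applied to the datum with `V₁` and `V₂` exchanged.
-/

section PLC

variable {V : Type*} [AddCommGroup V] [Module ℝ V] {A : Set V}

theorem mem_PLC_of_mem {a : V} (ha : a ∈ A) : a ∈ PLC A := by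
  classical
  refine ⟨Finsupp.single a 1, fun b => ?_, ?_, by simp, by simp⟩
  · by_cases h : a = b <;> simp [h]
  · simpa using ha

theorem PLC_mono {B : Set V} (h : A ⊆ B) : PLC A ⊆ PLC B := by
  rintro v ⟨f, hf0, hfA, hf, rfl⟩
  exact ⟨f, hf0, hfA.trans h, hf, rfl⟩

theorem smul_mem_PLC {v : V} (hv : v ∈ PLC A) {c : ℝ} (hc : 0 < c) : c • v ∈ PLC A := by
  obtain ⟨f, hf0, hfA, hf, rfl⟩ := hv
  refine ⟨c • f, fun a => mul_nonneg hc.le (hf0 a), ?_, smul_ne_zero hc.ne' hf, ?_⟩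
  · rwa [Finsupp.support_smul_eq hc.ne']
  · rw [Finsupp.smul_sum, Finsupp.sum_smul_index fun a => zero_smul ℝ a]
    exact Finsupp.sum_congr fun a _ => (mul_smul c (f a) a).symm

theorem add_mem_PLC {v w : V} (hv : v ∈ PLC A) (hw : w ∈ PLC A) : v + w ∈ PLC A := by
  classical
  obtain ⟨f, hf0, hfA, hf, rfl⟩ := hv
  obtain ⟨g, hg0, hgA, -, rfl⟩ := hw
  refine ⟨f + g, fun a => add_nonneg (hf0 a) (hg0 a), ?_, ?_, ?_⟩
  · refine (Finset.coe_subset.mpr Finsupp.support_add).trans ?_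
    rw [Finset.coe_union]
    exact Set.union_subset hfA hgA
  · refine fun hfg => hf (Finsupp.ext fun a => ?_)
    have := DFunLike.congr_fun hfg a
    simp only [Finsupp.coe_add, Pi.add_apply, Finsupp.coe_zero, Pi.zero_apply] at this ⊢
    linarith [hf0 a, hg0 a]
  · exact (Finsupp.sum_add_index' (fun a => zero_smul ℝ a) fun a _ _ => add_smul _ _ a).symm

theorem add_smul_mem_PLC {v a : V} (hv : v ∈ PLC A) (ha : a ∈ A) {c : ℝ} (hc : 0 ≤ c) :
    v + c • a ∈ PLC A := by
  rcases hc.eq_or_lt with rfl | hc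
  · simpa using hv
  · exact add_mem_PLC hv (smul_mem_PLC (mem_PLC_of_mem ha) hc)

theorem exists_eq_smul_add_of_mem_PLC {v : V} (hv : v ∈ PLC A) (a : V) :
    ∃ k : ℝ, ∃ u, (u = 0 ∨ u ∈ PLC (A \ {a})) ∧ v = k • a + u := by
  classical
  obtain ⟨f, hf0, hfA, -, rfl⟩ := hv
  refine ⟨f a, (f.erase a).sum fun b t => t • b, ?_, ?_⟩
  · by_cases he : f.erase a = 0
    · simp [he]
    refine Or.inr ⟨f.erase a, fun b => ?_, fun b hb => ?_, he, rfl⟩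
    · rw [Finsupp.erase_apply]; split_ifs <;> simp [hf0]
    · rw [Finset.mem_coe, Finsupp.support_erase, Finset.mem_erase] at hb
      exact ⟨hfA hb.2, hb.1⟩
  · conv_lhs => rw [← Finsupp.single_add_erase a f]
    rw [Finsupp.sum_add_index' (fun b => zero_smul ℝ b) fun b _ _ => add_smul _ _ b,
      Finsupp.sum_single_index (zero_smul ℝ a)]

theorem pos_of_smul_mem_PLC (hA : (0 : V) ∉ PLC A) {a : V} (ha : a ∈ A) {k : ℝ}
    (hk : k • a ∈ PLC A) : 0 < k := by
  by_contra! hk0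
  refine hA ?_
  simpa using add_smul_mem_PLC hk ha (neg_nonneg.mpr hk0)

theorem exists_pos_smul_of_add_eq_smul (hA : (0 : V) ∉ PLC A) {a : V} (ha : a ∈ A)
    (ha' : a ∉ PLC (A \ {a})) {x y : V} (hx : x ∈ PLC A) (hy : y ∈ PLC A) {c : ℝ} (h : x + y = c • a) :
    ∃ k : ℝ, 0 < k ∧ x = k • a := by
  obtain ⟨k, u, hu | hu, rfl⟩ := exists_eq_smul_add_of_mem_PLC hx a
  · subst hu
    exact ⟨k, pos_of_smul_mem_PLC hA ha (by simpa using hx), by simp⟩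
  exfalso
  obtain ⟨k', u', hu', rfl⟩ := exists_eq_smul_add_of_mem_PLC hy a
  have huu' : u + u' ∈ PLC (A \ {a}) := by
    rcases hu' with rfl | hu'
    · simpa using hu
    · exact add_mem_PLC hu hu'
  have hsum : u + u' = (c - k - k') • a := by
    rw [sub_smul, sub_smul, ← h]; abel
  rcases lt_or_ge 0 (c - k - k') with hm | hm
  · refine ha' ?_
    have := smul_mem_PLC huu' (inv_pos.mpr hm)
    rwa [hsum, smul_smul, inv_mul_cancel₀ hm.ne', one_smul] at this
  · refine hA ?_
    have := add_smul_mem_PLC (PLC_mono Set.sdiff_subset huu') ha (neg_nonneg.mpr hm)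
    rwa [hsum, ← add_smul, add_neg_cancel, zero_smul] at this

end PLC

namespace CoxeterDatum

variable {S V₁ V₂ W : Type*} [AddCommGroup V₁] [Module ℝ V₁]
  [AddCommGroup V₂] [Module ℝ V₂] [Group W] (D : CoxeterDatum S V₁ V₂ W)

section Roots

theorem ρ₁_mul_apply (w v : W) (x : V₁) : D.ρ₁ (w * v) x = D.ρ₁ w (D.ρ₁ v x) := by
  rw [map_mul, Module.End.mul_apply]

theorem ρ₂_mul_apply (w v : W) (y : V₂) : D.ρ₂ (w * v) y = D.ρ₂ w (D.ρ₂ v y) := by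
  rw [map_mul, Module.End.mul_apply]

theorem ρ₁_one_apply (x : V₁) : D.ρ₁ 1 x = x := by
  rw [map_one, Module.End.one_apply]

theorem ρ₁_inv_apply_apply (w : W) (x : V₁) : D.ρ₁ w⁻¹ (D.ρ₁ w x) = x := by
  rw [← ρ₁_mul_apply, inv_mul_cancel, ρ₁_one_apply]

theorem ρ₂_apply_inv_apply (w : W) (y : V₂) : D.ρ₂ w (D.ρ₂ w⁻¹ y) = y := by
  rw [← ρ₂_mul_apply, mul_inv_cancel, map_one, Module.End.one_apply]

theorem ρ₁_r_α (s : S) : D.ρ₁ (D.r s) (D.α s) = -D.α s := by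
  rw [D.hr₁, D.D1]; module

theorem ρ₂_r_β (s : S) : D.ρ₂ (D.r s) (D.β s) = -D.β s := by
  rw [D.hr₂, D.D1]; module

theorem r_inv (s : S) : (D.r s)⁻¹ = D.r s := inv_eq_of_mul_eq_one_right (D.r_sq s)

theorem α_mem_Phi₁ (s : S) : D.α s ∈ D.Phi₁ := ⟨1, s, (D.ρ₁_one_apply _).symm⟩

theorem ρ₁_mem_Phi₁ {z : V₁} (hz : z ∈ D.Phi₁) (w : W) : D.ρ₁ w z ∈ D.Phi₁ := by
  obtain ⟨v, s, rfl⟩ := hz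
  exact ⟨w * v, s, (D.ρ₁_mul_apply w v _).symm⟩

theorem neg_eq_ρ₁_mul_r (w : W) (s : S) : -D.ρ₁ w (D.α s) = D.ρ₁ (w * D.r s) (D.α s) := by
  rw [ρ₁_mul_apply, ρ₁_r_α, map_neg]

theorem neg_mem_Phi₁ {z : V₁} (hz : z ∈ D.Phi₁) : -z ∈ D.Phi₁ := by
  obtain ⟨w, s, rfl⟩ := hz
  exact ⟨_, _, D.neg_eq_ρ₁_mul_r w s⟩

theorem mem_PhiPos₁_or_mem_PhiNeg₁ {z : V₁} (hz : z ∈ D.Phi₁) :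
    z ∈ D.PhiPos₁ ∨ z ∈ D.PhiNeg₁ := by
  have hz' : z ∈ { v | ∃ w s, v = D.ρ₁ w (D.α s) } := hz
  rwa [D.decomp₁] at hz'

theorem notMem_PhiNeg₁_of_mem_PhiPos₁ {z : V₁} (hz : z ∈ D.PhiPos₁) : z ∉ D.PhiNeg₁ :=
  Set.disjoint_left.mp D.disj₁ hz

theorem mem_PhiNeg₁_iff {z : V₁} : z ∈ D.PhiNeg₁ ↔ -z ∈ D.PhiPos₁ := Set.mem_neg

theorem neg_mem_PhiPos₁_of_notMem_PhiPos₁ {z : V₁} (hz : z ∈ D.Phi₁) (h : z ∉ D.PhiPos₁) :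
    -z ∈ D.PhiPos₁ :=
  D.mem_PhiNeg₁_iff.mp ((D.mem_PhiPos₁_or_mem_PhiNeg₁ hz).resolve_left h)

theorem α_mem_PhiPos₁ (s : S) : D.α s ∈ D.PhiPos₁ :=
  ⟨D.α_mem_Phi₁ s, mem_PLC_of_mem (Set.mem_range_self s)⟩

theorem ne_zero_of_mem_Phi₁ {z : V₁} (hz : z ∈ D.Phi₁) : z ≠ 0 := by
  rintro rfl
  rcases D.mem_PhiPos₁_or_mem_PhiNeg₁ hz with h | h
  · exact D.D2a h.2
  · exact D.D2a (by simpa using (D.mem_PhiNeg₁_iff.mp h).2)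

theorem phi_ρ₁ {z : V₁} (hz : z ∈ D.Phi₁) (w : W) : D.phi (D.ρ₁ w z) = D.ρ₂ w (D.phi z) :=
  D.phi_equiv w z hz

theorem pair_phi_self {z : V₁} (hz : z ∈ D.Phi₁) : D.pair z (D.phi z) = 1 := by
  obtain ⟨w, s, rfl⟩ := hz
  rw [D.phi_ρ₁ (D.α_mem_Phi₁ s), D.phi_simple, D.pair_inv, D.D1]

theorem phi_neg {z : V₁} (hz : z ∈ D.Phi₁) : D.phi (-z) = -D.phi z := by
  obtain ⟨w, s, rfl⟩ := hz
  rw [D.neg_eq_ρ₁_mul_r, D.phi_ρ₁ (D.α_mem_Phi₁ s), D.phi_ρ₁ (D.α_mem_Phi₁ s), D.phi_simple,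
    ρ₂_mul_apply, ρ₂_r_β, map_neg]

theorem refl₁_α (s : S) : D.refl₁ (D.α s) = D.r s := by
  simpa [ρ₁_one_apply] using D.refl₁_eq 1 s

theorem refl₁_ρ₁ {z : V₁} (hz : z ∈ D.Phi₁) (w : W) :
    D.refl₁ (D.ρ₁ w z) = w * D.refl₁ z * w⁻¹ := by
  obtain ⟨v, s, rfl⟩ := hz
  rw [← ρ₁_mul_apply, D.refl₁_eq, D.refl₁_eq]
  group

theorem ρ₁_refl₁_self {z : V₁} (hz : z ∈ D.Phi₁) : D.ρ₁ (D.refl₁ z) z = -z := by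
  rw [D.refl₁_act z hz z, D.pair_phi_self hz]
  module

theorem ρ₂_refl₁_apply {z : V₁} (hz : z ∈ D.Phi₁) (y : V₂) :
    D.ρ₂ (D.refl₁ z) y = y - (2 * D.pair z y) • D.phi z := by
  obtain ⟨w, s, rfl⟩ := hz
  rw [D.refl₁_eq, ρ₂_mul_apply, ρ₂_mul_apply, D.hr₂, map_sub, map_smul, ρ₂_apply_inv_apply,
    D.phi_ρ₁ (D.α_mem_Phi₁ s), D.phi_simple, ← D.pair_inv w, ρ₂_apply_inv_apply]

/-- Since `r_z` is determined by `z` and `φ z`, this reduces to `φ (c • z) = c⁻¹ • φ z`, which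
comes from `r_z` negating `φ (c • z)` and `⟨c • z, φ (c • z)⟩ = 1`. -/
theorem refl₁_smul {z : V₁} (hz : z ∈ D.Phi₁) {c : ℝ} (hcz : c • z ∈ D.Phi₁) :
    D.refl₁ (c • z) = D.refl₁ z := by
  have hc : c ≠ 0 := by
    rintro rfl
    exact D.ne_zero_of_mem_Phi₁ hcz (zero_smul ℝ z)
  have hneg : D.ρ₂ (D.refl₁ z) (D.phi (c • z)) = -D.phi (c • z) := by
    rw [← D.phi_ρ₁ hcz, map_smul, D.ρ₁_refl₁_self hz, smul_neg, D.phi_neg hcz]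
  have hpair : c * D.pair z (D.phi (c • z)) = 1 := by
    simpa using D.pair_phi_self hcz
  have hphi : D.phi (c • z) = c⁻¹ • D.phi z := by
    rw [D.ρ₂_refl₁_apply hz] at hneg
    rw [← eq_inv_of_mul_eq_one_right hpair]
    linear_combination (norm := module) (1 / 2 : ℝ) • hneg
  refine D.ρ₁_inj (LinearMap.ext fun v => ?_)
  rw [D.refl₁_act _ hcz, D.refl₁_act _ hz, hphi, map_smul, smul_eq_mul, smul_smul]
  field_simp

theorem refl₁_neg {z : V₁} (hz : z ∈ D.Phi₁) : D.refl₁ (-z) = D.refl₁ z := by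
  simpa using D.refl₁_smul hz (c := -1) (by simpa using D.neg_mem_Phi₁ hz)

theorem exists_pos_smul_α_of_ρ₁_r_mem_PhiNeg₁ {s : S} {z : V₁} (hz : z ∈ D.PhiPos₁)
    (h : D.ρ₁ (D.r s) z ∈ D.PhiNeg₁) : ∃ c : ℝ, 0 < c ∧ z = c • D.α s := by
  refine exists_pos_smul_of_add_eq_smul D.D2a (Set.mem_range_self s) (D.D2c s) hz.2
    (D.mem_PhiNeg₁_iff.mp h).2 (c := 2 * D.pair z (D.β s)) ?_
  rw [D.hr₁]; abel

theorem ρ₁_r_mem_PhiPos₁ {s : S} {z : V₁} (hz : z ∈ D.PhiPos₁)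
    (h : ∀ c : ℝ, 0 < c → z ≠ c • D.α s) : D.ρ₁ (D.r s) z ∈ D.PhiPos₁ := by
  by_contra hpos
  obtain ⟨c, hc, rfl⟩ := D.exists_pos_smul_α_of_ρ₁_r_mem_PhiNeg₁ hz
    (D.mem_PhiNeg₁_iff.mpr (D.neg_mem_PhiPos₁_of_notMem_PhiPos₁ (D.ρ₁_mem_Phi₁ hz.1 _) hpos))
  exact h c hc rfl

end Roots

section Length

theorem inv_prod_map_r (l : List S) : (l.map D.r).prod⁻¹ = (l.reverse.map D.r).prod := by
  simp [List.prod_inv_reverse, List.map_reverse, Function.comp_def, D.r_inv]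

theorem exists_word (w : W) : ∃ l : List S, (l.map D.r).prod = w := by
  have hw : w ∈ Subgroup.closure (Set.range D.r) := D.r_gen ▸ Subgroup.mem_top w
  induction hw using Subgroup.closure_induction with
  | mem x hx =>
    obtain ⟨s, rfl⟩ := hx
    exact ⟨[s], by simp⟩
  | one => exact ⟨[], rfl⟩
  | mul x y _ _ hx hy =>
    obtain ⟨l₁, rfl⟩ := hx
    obtain ⟨l₂, rfl⟩ := hy
    exact ⟨l₁ ++ l₂, by simp⟩
  | inv x _ hx =>
    obtain ⟨l, rfl⟩ := hx
    exact ⟨l.reverse, (D.inv_prod_map_r l).symm⟩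

theorem len_le_length {w : W} {l : List S} (h : (l.map D.r).prod = w) : D.len w ≤ l.length :=
  Nat.sInf_le ⟨l, rfl, h⟩

theorem exists_length_eq_len (w : W) :
    ∃ l : List S, l.length = D.len w ∧ (l.map D.r).prod = w := by
  obtain ⟨l, h⟩ := D.exists_word w
  exact Nat.sInf_mem (s := {n | ∃ l : List S, l.length = n ∧ (l.map D.r).prod = w})
    ⟨l.length, l, rfl, h⟩

theorem len_one : D.len 1 = 0 :=
  Nat.le_zero.mp (D.len_le_length (l := []) rfl)

theorem len_r_le (s : S) : D.len (D.r s) ≤ 1 :=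
  D.len_le_length (l := [s]) (by simp)

theorem eq_one_of_len_eq_zero {w : W} (h : D.len w = 0) : w = 1 := by
  obtain ⟨l, hl, rfl⟩ := D.exists_length_eq_len w
  rw [h, List.length_eq_zero_iff] at hl
  simp [hl]

theorem len_inv_le (w : W) : D.len w⁻¹ ≤ D.len w := by
  obtain ⟨l, hl, rfl⟩ := D.exists_length_eq_len w
  rw [← hl, ← List.length_reverse]
  exact D.len_le_length (D.inv_prod_map_r l).symm

theorem len_inv (w : W) : D.len w⁻¹ = D.len w :=
  le_antisymm (D.len_inv_le w) (by simpa using D.len_inv_le w⁻¹)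

theorem len_mul_le (u v : W) : D.len (u * v) ≤ D.len u + D.len v := by
  obtain ⟨l₁, h₁, rfl⟩ := D.exists_length_eq_len u
  obtain ⟨l₂, h₂, rfl⟩ := D.exists_length_eq_len v
  rw [← h₁, ← h₂, ← List.length_append]
  exact D.len_le_length (by simp)

theorem len_r_mul_le (s : S) (w : W) : D.len (D.r s * w) ≤ D.len w + 1 := by
  linarith [D.len_mul_le (D.r s) w, D.len_r_le s]

theorem len_mul_r_le (w : W) (s : S) : D.len (w * D.r s) ≤ D.len w + 1 := by
  linarith [D.len_mul_le w (D.r s), D.len_r_le s]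

theorem exists_eq_r_mul_of_ne_one {w : W} (hw : w ≠ 1) :
    ∃ (s : S) (u : W), w = D.r s * u ∧ D.len u < D.len w := by
  obtain ⟨_ | ⟨s, l⟩, hl, rfl⟩ := D.exists_length_eq_len w
  · exact absurd rfl hw
  refine ⟨s, (l.map D.r).prod, by simp, ?_⟩
  rw [← hl, List.length_cons]
  exact Nat.lt_succ_of_le (D.len_le_length rfl)

theorem exists_eq_mul_r_of_ne_one {w : W} (hw : w ≠ 1) :
    ∃ (u : W) (s : S), w = u * D.r s ∧ D.len u < D.len w := by
  obtain ⟨s, u, hu, hlt⟩ := D.exists_eq_r_mul_of_ne_one (inv_ne_one.mpr hw)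
  refine ⟨u⁻¹, s, ?_, by rwa [D.len_inv, ← D.len_inv w]⟩
  rw [← inv_inv w, hu, mul_inv_rev, D.r_inv]

end Length

section Reflections

theorem refl₁_mem_T {z : V₁} (hz : z ∈ D.Phi₁) : D.refl₁ z ∈ D.T := by
  obtain ⟨w, s, rfl⟩ := hz
  exact ⟨w, s, D.refl₁_eq w s⟩

theorem exists_mem_PhiPos₁_refl₁_eq {t : W} (ht : t ∈ D.T) :
    ∃ y ∈ D.PhiPos₁, D.refl₁ y = t := by
  obtain ⟨w, s, rfl⟩ := ht
  have hz : D.ρ₁ w (D.α s) ∈ D.Phi₁ := ⟨w, s, rfl⟩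
  by_cases hpos : D.ρ₁ w (D.α s) ∈ D.PhiPos₁
  · exact ⟨_, hpos, D.refl₁_eq w s⟩
  · exact ⟨_, D.neg_mem_PhiPos₁_of_notMem_PhiPos₁ hz hpos, by rw [D.refl₁_neg hz, D.refl₁_eq]⟩

theorem mul_self_of_mem_T {t : W} (ht : t ∈ D.T) : t * t = 1 := by
  obtain ⟨w, s, rfl⟩ := ht
  rw [show w * D.r s * w⁻¹ * (w * D.r s * w⁻¹) = w * (D.r s * D.r s) * w⁻¹ by group, D.r_sq,
    mul_one, mul_inv_cancel]

theorem inv_of_mem_T {t : W} (ht : t ∈ D.T) : t⁻¹ = t :=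
  inv_eq_of_mul_eq_one_right (D.mul_self_of_mem_T ht)

theorem ne_one_of_mem_T {t : W} (ht : t ∈ D.T) : t ≠ 1 := by
  obtain ⟨w, s, rfl⟩ := ht
  rw [Ne, conj_eq_one_iff]
  exact D.r_ne_one s

theorem r_mul_mul_r_mem_T {t : W} (ht : t ∈ D.T) (s : S) : D.r s * t * D.r s ∈ D.T := by
  obtain ⟨w, s', rfl⟩ := ht
  exact ⟨D.r s * w, s', by rw [mul_inv_rev, D.r_inv]; group⟩

theorem refl₁_eq_r_of_ρ₁_α_eq_smul {z : V₁} (hz : z ∈ D.Phi₁) {s : S} {c : ℝ} (hc : c ≠ 1)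
    (h : D.ρ₁ (D.refl₁ z) (D.α s) = c • D.α s) : D.refl₁ z = D.r s := by
  set a := 2 * D.pair (D.α s) (D.phi z)
  have hza : a • z = (1 - c) • D.α s := by
    rw [D.refl₁_act z hz] at h
    rw [sub_smul, one_smul, ← h]
    abel
  have ha : a ≠ 0 := by
    rintro ha
    rw [ha, zero_smul, eq_comm, smul_eq_zero, sub_eq_zero] at hza
    exact hza.elim (Ne.symm hc) (D.ne_zero_of_mem_Phi₁ (D.α_mem_Phi₁ s))
  have hz' : z = (a⁻¹ * (1 - c)) • D.α s := by
    rw [mul_smul, ← hza, smul_smul, inv_mul_cancel₀ ha, one_smul]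
  rw [hz', D.refl₁_smul (D.α_mem_Phi₁ s) (hz' ▸ hz), D.refl₁_α]

end Reflections

section Descents

theorem len_mul_refl₁_lt_of_mem_PhiNeg₁ {w : W} {y : V₁} (hy : y ∈ D.PhiPos₁)
    (h : D.ρ₁ w y ∈ D.PhiNeg₁) : D.len (w * D.refl₁ y) < D.len w := by
  have hw : w ≠ 1 := by
    rintro rfl
    exact D.notMem_PhiNeg₁_of_mem_PhiPos₁ hy (by rwa [ρ₁_one_apply] at h)
  obtain ⟨s, u, rfl, hu⟩ := D.exists_eq_r_mul_of_ne_one hw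
  by_cases hpos : D.ρ₁ u y ∈ D.PhiPos₁
  · obtain ⟨c, -, hc⟩ := D.exists_pos_smul_α_of_ρ₁_r_mem_PhiNeg₁ hpos
      (by rwa [← ρ₁_mul_apply])
    have hconj : u * D.refl₁ y * u⁻¹ = D.r s := by
      rw [← D.refl₁_ρ₁ hy.1, hc, D.refl₁_smul (D.α_mem_Phi₁ s) (hc ▸ D.ρ₁_mem_Phi₁ hy.1 u),
        D.refl₁_α]
    have hw' : D.r s * u * D.refl₁ y = u := by
      rw [← hconj, show u * D.refl₁ y * u⁻¹ * u * D.refl₁ y = u * (D.refl₁ y * D.refl₁ y) by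
        group, D.mul_self_of_mem_T (D.refl₁_mem_T hy.1), mul_one]
    rwa [hw']
  · have hneg := (D.mem_PhiPos₁_or_mem_PhiNeg₁ (D.ρ₁_mem_Phi₁ hy.1 u)).resolve_left hpos
    have := len_mul_refl₁_lt_of_mem_PhiNeg₁ hy hneg
    have := D.len_r_mul_le s (u * D.refl₁ y)
    rw [mul_assoc]
    omega
termination_by D.len w

theorem ρ₁_mem_PhiNeg₁_iff {w : W} {y : V₁} (hy : y ∈ D.PhiPos₁) :
    D.ρ₁ w y ∈ D.PhiNeg₁ ↔ D.len (w * D.refl₁ y) < D.len w := by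
  refine ⟨D.len_mul_refl₁_lt_of_mem_PhiNeg₁ hy, fun h => ?_⟩
  by_contra hneg
  have hpos := (D.mem_PhiPos₁_or_mem_PhiNeg₁ (D.ρ₁_mem_Phi₁ hy.1 w)).resolve_right hneg
  have hneg' : D.ρ₁ (w * D.refl₁ y) y ∈ D.PhiNeg₁ := by
    rwa [ρ₁_mul_apply, D.ρ₁_refl₁_self hy.1, map_neg, mem_PhiNeg₁_iff, neg_neg]
  have := D.len_mul_refl₁_lt_of_mem_PhiNeg₁ hy hneg'
  rw [mul_assoc, D.mul_self_of_mem_T (D.refl₁_mem_T hy.1), mul_one] at this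
  omega

theorem ρ₁_α_mem_PhiNeg₁_iff {w : W} {s : S} :
    D.ρ₁ w (D.α s) ∈ D.PhiNeg₁ ↔ D.len (w * D.r s) < D.len w := by
  rw [D.ρ₁_mem_PhiNeg₁_iff (D.α_mem_PhiPos₁ s), D.refl₁_α]

theorem ρ₁_inv_α_mem_PhiNeg₁_iff {w : W} {s : S} :
    D.ρ₁ w⁻¹ (D.α s) ∈ D.PhiNeg₁ ↔ D.len (D.r s * w) < D.len w := by
  rw [ρ₁_α_mem_PhiNeg₁_iff, ← D.len_inv (D.r s * w), ← D.len_inv w, mul_inv_rev, D.r_inv]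

/-- `s` is also a left descent of `t r_s`: as `t ≠ r_s`, the positive root `-t α_s` is not on the
ray of `α_s`, so `r_s` keeps it positive. -/
theorem len_r_mul_mul_r_add_two_le {t : W} (ht : t ∈ D.T) {s : S} (hts : t ≠ D.r s)
    (h : D.ρ₁ t (D.α s) ∈ D.PhiNeg₁) : D.len (D.r s * t * D.r s) + 2 ≤ D.len t := by
  have h₁ : D.len (t * D.r s) < D.len t := D.ρ₁_α_mem_PhiNeg₁_iff.mp h
  have hray : ∀ c : ℝ, 0 < c → -D.ρ₁ t (D.α s) ≠ c • D.α s := by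
    intro c hc hcα
    obtain ⟨z, hz, rfl⟩ := D.exists_mem_PhiPos₁_refl₁_eq ht
    refine hts (D.refl₁_eq_r_of_ρ₁_α_eq_smul hz.1 (c := -c) (by linarith) ?_)
    rw [neg_smul, ← hcα, neg_neg]
  have h₂ : D.len (D.r s * (t * D.r s)) < D.len (t * D.r s) := by
    rw [← ρ₁_inv_α_mem_PhiNeg₁_iff, mul_inv_rev, D.r_inv, D.inv_of_mem_T ht, ρ₁_mul_apply,
      mem_PhiNeg₁_iff, ← map_neg]
    exact D.ρ₁_r_mem_PhiPos₁ (D.mem_PhiNeg₁_iff.mp h) hray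
  rw [mul_assoc]
  omega

end Descents

section CanonicalGenerators

/-- Induction on `ℓ(t)`: take a right descent `s` of `t`. If `r_s ∈ H`, conjugating by `r_s`
shortens `t` by two; otherwise neither `y` nor `-t y` is on the ray of `α_s`, and the whole
configuration conjugated by `r_s` (inside `r_s H r_s`) is again of this kind, with
`ℓ(r_s t r_s) < ℓ(t)`. -/
theorem exists_mem_len_conj_lt (H : Subgroup W) {t : W} (htH : t ∈ H) (htT : t ∈ D.T)
    {y : V₁} (hy : y ∈ D.PhiPos₁) (hyH : D.refl₁ y ∈ H) (hyt : D.refl₁ y ≠ t)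
    (h : D.ρ₁ t y ∈ D.PhiNeg₁) : ∃ w ∈ H, D.len (w * t * w⁻¹) < D.len t := by
  obtain ⟨u, s, htu, hu⟩ := D.exists_eq_mul_r_of_ne_one (D.ne_one_of_mem_T htT)
  have hdesc : D.ρ₁ t (D.α s) ∈ D.PhiNeg₁ := by
    rwa [ρ₁_α_mem_PhiNeg₁_iff, show t * D.r s = u by rw [htu, mul_assoc, D.r_sq, mul_one]]
  have hts : t ≠ D.r s := by
    rintro rfl
    obtain ⟨c, -, rfl⟩ := D.exists_pos_smul_α_of_ρ₁_r_mem_PhiNeg₁ hy h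
    exact hyt (by rw [D.refl₁_smul (D.α_mem_Phi₁ s) hy.1, D.refl₁_α])
  have hshort := D.len_r_mul_mul_r_add_two_le htT hts hdesc
  by_cases hsH : D.r s ∈ H
  · exact ⟨D.r s, hsH, by rw [D.r_inv]; omega⟩
  have hray : ∀ z ∈ D.Phi₁, D.refl₁ z ∈ H → ∀ c : ℝ, 0 < c → z ≠ c • D.α s := by
    rintro z hz hzH c - rfl
    rw [D.refl₁_smul (D.α_mem_Phi₁ s) hz, D.refl₁_α] at hzH
    exact hsH hzH
  have hty : D.refl₁ (-D.ρ₁ t y) ∈ H := by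
    rw [D.refl₁_neg (D.ρ₁_mem_Phi₁ hy.1 t), D.refl₁_ρ₁ hy.1]
    exact H.mul_mem (H.mul_mem htH hyH) (H.inv_mem htH)
  let H' : Subgroup W := H.comap (MulAut.conj (D.r s)).toMonoidHom
  have hH' {x : W} (hx : x ∈ H) : D.r s * x * D.r s ∈ H' := by
    simpa [H', D.r_inv, mul_assoc, D.r_sq, ← mul_assoc (D.r s) (D.r s)] using hx
  obtain ⟨w, hw, hlt⟩ := exists_mem_len_conj_lt H' (hH' htH) (D.r_mul_mul_r_mem_T htT s)
    (D.ρ₁_r_mem_PhiPos₁ hy (hray y hy.1 hyH))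
    (by rw [D.refl₁_ρ₁ hy.1, D.r_inv]; exact hH' hyH)
    (by
      rw [D.refl₁_ρ₁ hy.1, D.r_inv]
      exact fun he => hyt (mul_left_cancel (mul_right_cancel he)))
    (by
      rw [← ρ₁_mul_apply, mul_assoc, mul_assoc, D.r_sq, mul_one, ρ₁_mul_apply,
        mem_PhiNeg₁_iff, ← map_neg]
      exact D.ρ₁_r_mem_PhiPos₁ (D.mem_PhiNeg₁_iff.mp h)
        (hray _ (D.neg_mem_Phi₁ (D.ρ₁_mem_Phi₁ hy.1 t)) hty))
  refine ⟨D.r s * w * D.r s, by simpa [H', D.r_inv] using hw, ?_⟩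
  have hconj : D.r s * w * D.r s * t * (D.r s * w * D.r s)⁻¹ =
      D.r s * (w * (D.r s * t * D.r s) * w⁻¹) * D.r s := by
    simp only [mul_inv_rev, D.r_inv]
    group
  rw [hconj]
  linarith [D.len_mul_r_le (D.r s * (w * (D.r s * t * D.r s) * w⁻¹)) s,
    D.len_r_mul_le s (w * (D.r s * t * D.r s) * w⁻¹)]
termination_by D.len t

theorem mem_Nbar_self {t : W} (ht : t ∈ D.T) : t ∈ D.Nbar t := by
  refine ⟨ht, ?_⟩
  rw [D.mul_self_of_mem_T ht, D.len_one, Nat.pos_iff_ne_zero]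
  exact fun h => D.ne_one_of_mem_T ht (D.eq_one_of_len_eq_zero h)

theorem mem_of_mem_SW {W' : Subgroup W} {t : W} (h : t ∈ D.SW W') : t ∈ W' :=
  (h.2.symm ▸ Set.mem_singleton t : t ∈ D.Nbar t ∩ W').2

theorem mem_PhiSub₁_of_mem_Delta₁ {W' : Subgroup W} {x : V₁} (hx : x ∈ D.Delta₁ W') :
    x ∈ D.PhiSub₁ W' :=
  ⟨hx.1.1, D.mem_of_mem_SW hx.2⟩

theorem ρ₁_mem_PhiSub₁ {W' : Subgroup W} {w : W} (hw : w ∈ W') {x : V₁}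
    (hx : x ∈ D.PhiSub₁ W') : D.ρ₁ w x ∈ D.PhiSub₁ W' := by
  refine ⟨D.ρ₁_mem_Phi₁ hx.1 w, ?_⟩
  rw [D.refl₁_ρ₁ hx.1]
  exact W'.mul_mem (W'.mul_mem hw hx.2) (W'.inv_mem hw)

theorem exists_eq_ρ₁_of_mem_PhiSub₁ (W' : Subgroup W) {z : V₁} (hz : z ∈ D.PhiSub₁ W') :
    ∃ w ∈ W', ∃ x ∈ D.Delta₁ W', z = D.ρ₁ w x := by
  obtain ⟨hzΦ, hzW⟩ := hz
  have hzT := D.refl₁_mem_T hzΦ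
  by_cases hS : D.Nbar (D.refl₁ z) ∩ W' = {D.refl₁ z}
  · by_cases hpos : z ∈ D.PhiPos₁
    · exact ⟨1, W'.one_mem, z, ⟨hpos, hzT, hS⟩, (D.ρ₁_one_apply z).symm⟩
    · have hx : -z ∈ D.Delta₁ W' := by
        refine ⟨D.neg_mem_PhiPos₁_of_notMem_PhiPos₁ hzΦ hpos, ?_⟩
        rw [D.refl₁_neg hzΦ]
        exact ⟨hzT, hS⟩
      refine ⟨D.refl₁ (-z), by rwa [D.refl₁_neg hzΦ], -z, hx, ?_⟩
      rw [D.ρ₁_refl₁_self (D.neg_mem_Phi₁ hzΦ), neg_neg]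
  obtain ⟨t', ⟨⟨ht'T, ht'⟩, ht'W⟩, ht'z⟩ : ∃ t' ∈ D.Nbar (D.refl₁ z) ∩ W', t' ≠ D.refl₁ z := by
    by_contra! h
    exact hS (Set.eq_singleton_iff_unique_mem.mpr ⟨⟨D.mem_Nbar_self hzT, hzW⟩, h⟩)
  obtain ⟨y, hy, rfl⟩ := D.exists_mem_PhiPos₁_refl₁_eq ht'T
  obtain ⟨w, hw, hlt⟩ := D.exists_mem_len_conj_lt W' hzW hzT hy ht'W ht'z
    ((D.ρ₁_mem_PhiNeg₁_iff hy).mpr ht')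
  have : D.len (D.refl₁ (D.ρ₁ w z)) < D.len (D.refl₁ z) := by rwa [D.refl₁_ρ₁ hzΦ]
  obtain ⟨v, hv, x, hx, hwzx⟩ := exists_eq_ρ₁_of_mem_PhiSub₁ W' (D.ρ₁_mem_PhiSub₁ hw ⟨hzΦ, hzW⟩)
  exact ⟨w⁻¹ * v, W'.mul_mem (W'.inv_mem hw) hv, x, hx, by
    rw [ρ₁_mul_apply, ← hwzx, ρ₁_inv_apply_apply]⟩
termination_by D.len (D.refl₁ z)

theorem PhiSub₁_eq (W' : Subgroup W) :
    D.PhiSub₁ W' = { v | ∃ w ∈ W', ∃ x ∈ D.Delta₁ W', v = D.ρ₁ w x } := by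
  ext z
  refine ⟨D.exists_eq_ρ₁_of_mem_PhiSub₁ W', ?_⟩
  rintro ⟨w, hw, x, hx, rfl⟩
  exact D.ρ₁_mem_PhiSub₁ hw (D.mem_PhiSub₁_of_mem_Delta₁ hx)

end CanonicalGenerators

def flip : CoxeterDatum S V₂ V₁ W where
  pair := D.pair.flip
  α := D.β
  β := D.α
  α_inj := D.β_inj
  β_inj := D.α_inj
  D1 := D.D1
  D2a := D.D2b
  D2b := D.D2a
  D2c := D.D2d
  D2d := D.D2c
  D3 s t hst := D.D3 t s hst.symm
  D4 s t h := D.D4 t s h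
  D5 s t hst := by simpa [mul_comm] using D.D5 t s hst.symm
  r := D.r
  r_gen := D.r_gen
  r_ne_one := D.r_ne_one
  r_sq := D.r_sq
  ρ₁ := D.ρ₂
  ρ₂ := D.ρ₁
  ρ₁_inj := D.ρ₂_inj
  ρ₂_inj := D.ρ₁_inj
  hr₁ := D.hr₂
  hr₂ := D.hr₁
  pair_inv w y x := D.pair_inv w x y
  phi := D.phiInv
  phiInv := D.phi
  refl₁ := D.refl₂
  refl₂ := D.refl₁
  decomp₁ := D.decomp₂
  disj₁ := D.disj₂
  decomp₂ := D.decomp₁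
  disj₂ := D.disj₁
  phi_mem := D.phiInv_mem
  phiInv_mem := D.phi_mem
  phiInv_phi := D.phi_phiInv
  phi_phiInv := D.phiInv_phi
  phi_simple s := by rw [← D.phi_simple, D.phiInv_phi _ (D.α_mem_Phi₁ s)]
  phi_equiv w y hy := by
    rw [← D.phi_phiInv y hy, ← D.phi_ρ₁ (D.phiInv_mem y hy), D.phiInv_phi _ (D.phiInv_mem y hy),
      D.phiInv_phi _ (D.ρ₁_mem_Phi₁ (D.phiInv_mem y hy) w)]
  refl₁_eq := D.refl₂_eq
  refl₂_eq := D.refl₁_eq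
  refl₁_act := D.refl₂_act
  refl₂_act := D.refl₁_act

end CoxeterDatum

theorem stmt14_general {S V₁ V₂ W : Type*} [AddCommGroup V₁] [Module ℝ V₁]
    [AddCommGroup V₂] [Module ℝ V₂] [Group W]
    (D : CoxeterDatum S V₁ V₂ W)
    (W' : Subgroup W) :
    D.PhiSub₁ W' = { v | ∃ w ∈ W', ∃ x ∈ D.Delta₁ W', v = D.ρ₁ w x } ∧
    D.PhiSub₂ W' = { v | ∃ w ∈ W', ∃ y ∈ D.Delta₂ W', v = D.ρ₂ w y } :=
  ⟨D.PhiSub₁_eq W', D.flip.PhiSub₁_eq W'⟩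

/-- For a reflection subgroup `W'` of `W` and each `i ∈ {1,2}`,
`Φᵢ(W') = W'·Δᵢ(W')`. -/
theorem stmt14 {S V₁ V₂ W : Type*} [AddCommGroup V₁] [Module ℝ V₁]
    [AddCommGroup V₂] [Module ℝ V₂] [Group W]
    (D : CoxeterDatum S V₁ V₂ W)
    (W' : Subgroup W) (hW' : D.IsReflectionSubgroup W') :
    D.PhiSub₁ W' = { v | ∃ w ∈ W', ∃ x ∈ D.Delta₁ W', v = D.ρ₁ w x } ∧
    D.PhiSub₂ W' = { v | ∃ w ∈ W', ∃ y ∈ D.Delta₂ W', v = D.ρ₂ w y } :=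
  stmt14_general D W'
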